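/- In the construction of Section 4, with δ_k := ‖q'_{4k-1}β‖ − ‖q_{4k}α‖, one has 0 < 2δ_k·a_{4k+1} < ‖q_{4k+1}α‖ < ‖q'_{4k+1}β‖ for all k ≥ 1. -/

import Mathlib

noncomputable section

/-- distance from `t` to the nearest integer -/
def nint (t : ℝ) : ℝ := |t - round t|

/-- iterates of the Gauss map -/
def gaussIter (α : ℝ) : ℕ → ℝ
  | 0 => α
  | k + 1 => (Int.fract (gaussIter α k))⁻¹

/-- partial quotients of `α`: `pquot α k` is `a_k` for `k ≥ 1` -/
def pquot (α : ℝ) (k : ℕ) : ℕ := (⌊gaussIter α k⌋).toNat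

/-- the pair `(q_{k-1}, q_k)` of denominators of principal convergents of `α` -/
def qpair (α : ℝ) : ℕ → ℕ × ℕ
  | 0 => (0, 1)
  | k + 1 => ((qpair α k).2, pquot α (k + 1) * (qpair α k).2 + (qpair α k).1)

/-- the denominator `q_k` of the `k`-th principal convergent of `α` -/
def qden (α : ℝ) (k : ℕ) : ℕ := (qpair α k).2

end

/-!
Write `d_n = ‖q_n α‖` and `e_n = ‖q'_n β‖`. For an irrational `ξ ∈ (0, 1)` these errors are the
products `ξ {G₁} ⋯ {Gₙ}` of the fractional parts of the Gauss iterates, and they satisfy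
`q_{n+1} d_n + q_n d_{n+1} = 1` and `d_{n+2} = d_n - a_{n+2} d_{n+1}`.

Block by block, the prescribed partial quotients force `q'_{4k+1} = q_{4k+1} + 1` and
`q'_{4k+2} = q_{4k+2} - 1`. With `A = q_{4k+1}`, `B = q_{4k+2}`, `b = q_{4k}`, `s = q'_{4k-1}`, the
two determinant identities combine to `A (A + 1) δ_k = A s e_{4k+1} + (A + 1) b d_{4k+1} - 1`,
where `A s + (A + 1) b = A + B` and both `d_{4k+1}` and `e_{4k+1}` lie in `(1/(A+B), 1/(B-1))`.
Hence `0 < δ_k < a_{4k+2} / (B (B - 1))`, which is below `d_{4k+1} / (2 a_{4k+1})` since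
`4 a_{4k+1} ≤ A`. Finally `a_{4k+3} = 1` and `a'_{4k+3} = 2` give
`(2B + A) d_{4k+1} < 2 < (2B + A) e_{4k+1}`.
-/

open Int (fract)

section

variable {ξ : ℝ}

theorem irrational_gaussIter (hξ : Irrational ξ) : ∀ n, Irrational (gaussIter ξ n)
  | 0 => hξ
  | n + 1 => by
    rw [gaussIter, ← Int.self_sub_floor]
    exact ((irrational_gaussIter hξ n).sub_intCast _).inv

theorem fract_gaussIter_pos (hξ : Irrational ξ) (n : ℕ) : 0 < fract (gaussIter ξ n) :=
  Int.fract_pos.mpr ((irrational_gaussIter hξ n).ne_int _)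

theorem fract_gaussIter_mul_gaussIter_succ (hξ : Irrational ξ) (n : ℕ) :
    fract (gaussIter ξ n) * gaussIter ξ (n + 1) = 1 :=
  mul_inv_cancel₀ (fract_gaussIter_pos hξ n).ne'

theorem one_lt_gaussIter_succ (hξ : Irrational ξ) (n : ℕ) : 1 < gaussIter ξ (n + 1) :=
  one_lt_inv_iff₀.mpr ⟨fract_gaussIter_pos hξ n, Int.fract_lt_one _⟩

theorem gaussIter_succ_eq_pquot_add_fract (n : ℕ) :
    gaussIter ξ (n + 1) = pquot ξ (n + 1) + fract (gaussIter ξ (n + 1)) := by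
  have hfloor : 0 ≤ ⌊gaussIter ξ (n + 1)⌋ :=
    Int.floor_nonneg.mpr (inv_nonneg.mpr (Int.fract_nonneg _))
  have hcast : (pquot ξ (n + 1) : ℝ) = ⌊gaussIter ξ (n + 1)⌋ := by
    exact_mod_cast Int.toNat_of_nonneg hfloor
  rw [hcast, Int.floor_add_fract]

theorem one_le_pquot_succ (hξ : Irrational ξ) (n : ℕ) : 1 ≤ pquot ξ (n + 1) := by
  have : (1 : ℤ) ≤ ⌊gaussIter ξ (n + 1)⌋ :=
    Int.le_floor.mpr (by exact_mod_cast (one_lt_gaussIter_succ hξ n).le)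
  unfold pquot
  omega

theorem qden_zero : qden ξ 0 = 1 :=
  rfl

theorem qden_one : qden ξ 1 = pquot ξ 1 := by
  simp [qden, qpair]

theorem qden_add_two (n : ℕ) : qden ξ (n + 2) = pquot ξ (n + 2) * qden ξ (n + 1) + qden ξ n :=
  rfl

theorem qden_pos (hξ : Irrational ξ) : ∀ n, 0 < qden ξ n
  | 0 => Nat.one_pos
  | 1 => qden_one (ξ := ξ) ▸ one_le_pquot_succ hξ 0
  | n + 2 => by
    rw [qden_add_two]
    exact Nat.add_pos_right _ (qden_pos hξ n)

noncomputable def pnum (ξ : ℝ) : ℕ → ℤ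
  | 0 => 0
  | 1 => 1
  | n + 2 => pquot ξ (n + 2) * pnum ξ (n + 1) + pnum ξ n

/-- `approxErr ξ n = |q_n ξ - p_n|`, see `qden_mul_sub_pnum`. -/
noncomputable def approxErr (ξ : ℝ) : ℕ → ℝ
  | 0 => ξ
  | n + 1 => approxErr ξ n * fract (gaussIter ξ (n + 1))

theorem approxErr_pos (hξ : Irrational ξ) (hξ0 : 0 < ξ) : ∀ n, 0 < approxErr ξ n
  | 0 => hξ0
  | n + 1 => mul_pos (approxErr_pos hξ hξ0 n) (fract_gaussIter_pos hξ (n + 1))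

theorem approxErr_succ_lt (hξ : Irrational ξ) (hξ0 : 0 < ξ) (n : ℕ) :
    approxErr ξ (n + 1) < approxErr ξ n :=
  mul_lt_of_lt_one_right (approxErr_pos hξ hξ0 n) (Int.fract_lt_one _)

theorem approxErr_one (hξ : Irrational ξ) (hξ0 : 0 < ξ) (hξ1 : ξ < 1) :
    approxErr ξ 1 = 1 - pquot ξ 1 * ξ := by
  have hinv := fract_gaussIter_mul_gaussIter_succ hξ 0
  rw [gaussIter, Int.fract_eq_self.mpr ⟨hξ0.le, hξ1⟩] at hinv
  have hsplit := gaussIter_succ_eq_pquot_add_fract (ξ := ξ) 0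
  simp only [approxErr]
  linear_combination hinv - ξ * hsplit

theorem approxErr_add_two (hξ : Irrational ξ) (n : ℕ) :
    approxErr ξ (n + 2) = approxErr ξ n - pquot ξ (n + 2) * approxErr ξ (n + 1) := by
  have hinv := fract_gaussIter_mul_gaussIter_succ hξ (n + 1)
  have hsplit := gaussIter_succ_eq_pquot_add_fract (ξ := ξ) (n + 1)
  simp only [approxErr]
  linear_combination approxErr ξ n * hinv -
    approxErr ξ n * fract (gaussIter ξ (n + 1)) * hsplit

theorem qden_succ_mul_approxErr_add_qden_mul_approxErr_succ (hξ : Irrational ξ) (hξ0 : 0 < ξ)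
    (hξ1 : ξ < 1) (n : ℕ) :
    qden ξ (n + 1) * approxErr ξ n + qden ξ n * approxErr ξ (n + 1) = 1 := by
  induction n with
  | zero =>
    rw [qden_one, approxErr_one hξ hξ0 hξ1]
    simp [qden, qpair, approxErr]
  | succ n ih =>
    rw [qden_add_two, approxErr_add_two hξ]
    push_cast
    linear_combination ih

theorem qden_mul_sub_pnum (hξ : Irrational ξ) (hξ0 : 0 < ξ) (hξ1 : ξ < 1) :
    ∀ n, qden ξ n * ξ - pnum ξ n = (-1) ^ n * approxErr ξ n
  | 0 => by simp [qden, qpair, pnum, approxErr]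
  | 1 => by
    rw [qden_one, approxErr_one hξ hξ0 hξ1]
    simp [pnum]
  | n + 2 => by
    rw [qden_add_two, pnum, approxErr_add_two hξ]
    push_cast
    linear_combination (pquot ξ (n + 2) : ℝ) * qden_mul_sub_pnum hξ hξ0 hξ1 (n + 1) +
      qden_mul_sub_pnum hξ hξ0 hξ1 n

theorem approxErr_lt_half (hξ : Irrational ξ) (hξ0 : 0 < ξ) (hξ1 : ξ < 1) {n : ℕ}
    (hn : 1 ≤ n) : approxErr ξ n < 1 / 2 := by
  have hmono : approxErr ξ n ≤ approxErr ξ 1 :=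
    (strictAnti_nat_of_succ_lt (approxErr_succ_lt hξ hξ0)).antitone hn
  have hlt : approxErr ξ 1 < ξ := approxErr_succ_lt hξ hξ0 0
  have ha : (1 : ℝ) ≤ pquot ξ 1 := by exact_mod_cast one_le_pquot_succ hξ 0
  rw [approxErr_one hξ hξ0 hξ1] at hmono hlt
  nlinarith

theorem nint_qden_mul (hξ : Irrational ξ) (hξ0 : 0 < ξ) (hξ1 : ξ < 1) {n : ℕ} (hn : 1 ≤ n) :
    nint (qden ξ n * ξ) = approxErr ξ n := by
  have habs : |qden ξ n * ξ - pnum ξ n| = approxErr ξ n := by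
    rw [qden_mul_sub_pnum hξ hξ0 hξ1, abs_mul, abs_pow, abs_neg, abs_one, one_pow, one_mul,
      abs_of_pos (approxErr_pos hξ hξ0 n)]
  have hlt := approxErr_lt_half hξ hξ0 hξ1 hn
  have hround : round (qden ξ n * ξ : ℝ) = pnum ξ n := by
    rw [round_eq_iff]
    constructor <;> linarith [abs_lt.mp (habs ▸ hlt)]
  rw [nint, hround, habs]

theorem qden_succ_mul_approxErr_lt_one (hξ : Irrational ξ) (hξ0 : 0 < ξ) (hξ1 : ξ < 1) (n : ℕ) :
    qden ξ (n + 1) * approxErr ξ n < 1 := by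
  have hid := qden_succ_mul_approxErr_add_qden_mul_approxErr_succ hξ hξ0 hξ1 n
  have hpos : 0 < (qden ξ n : ℝ) * approxErr ξ (n + 1) :=
    mul_pos (by exact_mod_cast qden_pos hξ n) (approxErr_pos hξ hξ0 _)
  linarith

theorem one_lt_qden_add_mul_approxErr (hξ : Irrational ξ) (hξ0 : 0 < ξ) (hξ1 : ξ < 1) (n : ℕ) :
    1 < (qden ξ (n + 1) + qden ξ n) * approxErr ξ n := by
  have hid := qden_succ_mul_approxErr_add_qden_mul_approxErr_succ hξ hξ0 hξ1 n
  have hlt : (qden ξ n : ℝ) * approxErr ξ (n + 1) < qden ξ n * approxErr ξ n :=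
    mul_lt_mul_of_pos_left (approxErr_succ_lt hξ hξ0 n) (by exact_mod_cast qden_pos hξ n)
  linarith

theorem pquot_mul_approxErr_lt (hξ : Irrational ξ) (hξ0 : 0 < ξ) (n : ℕ) :
    pquot ξ (n + 2) * approxErr ξ (n + 1) < approxErr ξ n := by
  have := approxErr_pos hξ hξ0 (n + 2)
  rw [approxErr_add_two hξ] at this
  linarith

theorem approxErr_lt_pquot_add_one_mul (hξ : Irrational ξ) (hξ0 : 0 < ξ) (n : ℕ) :
    approxErr ξ n < (pquot ξ (n + 2) + 1) * approxErr ξ (n + 1) := by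
  have := approxErr_succ_lt hξ hξ0 (n + 1)
  rw [approxErr_add_two hξ] at this
  linarith

end

section

variable {α β : ℝ}

theorem approxErr_lt_approxErr (hα : Irrational α) (hα0 : 0 < α) (hα1 : α < 1)
    (hβ : Irrational β) (hβ0 : 0 < β) (hβ1 : β < 1) {n : ℕ}
    (hq : qden β n = qden α n + 1) (hq' : qden β (n + 1) + 1 = qden α (n + 1))
    (ha : pquot α (n + 2) = 1) (hb : pquot β (n + 2) = 2) :
    approxErr α n < approxErr β n := by
  have hdet_α := qden_succ_mul_approxErr_add_qden_mul_approxErr_succ hα hα0 hα1 n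
  have hdet_β := qden_succ_mul_approxErr_add_qden_mul_approxErr_succ hβ hβ0 hβ1 n
  have hqR : (qden β n : ℝ) = qden α n + 1 := by exact_mod_cast hq
  have hq'R : (qden β (n + 1) : ℝ) = qden α (n + 1) - 1 := by
    rw [eq_sub_iff_add_eq]; exact_mod_cast hq'
  rw [hqR, hq'R] at hdet_β
  have hα2 : approxErr α n < 2 * approxErr α (n + 1) := by
    have := approxErr_lt_pquot_add_one_mul hα hα0 n
    rwa [ha, Nat.cast_one, one_add_one_eq_two] at this
  have hβ2 : 2 * approxErr β (n + 1) < approxErr β n := by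
    have := pquot_mul_approxErr_lt hβ hβ0 n
    rwa [hb, Nat.cast_two] at this
  have hA : (0 : ℝ) < qden α n := by exact_mod_cast qden_pos hα n
  have hβpos := approxErr_pos hβ hβ0 n
  have hlt_α : (2 * qden α (n + 1) + qden α n) * approxErr α n < 2 := by
    nlinarith [mul_pos hA (sub_pos.mpr hα2)]
  have hlt_β : 2 < (2 * qden α (n + 1) + qden α n) * approxErr β n := by
    nlinarith [mul_pos (by linarith : (0 : ℝ) < qden α n + 1) (sub_pos.mpr hβ2)]
  exact lt_of_mul_lt_mul_left (hlt_α.trans hlt_β) (by positivity)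

theorem approxErr_sub_approxErr_pos_and_lt (hα : Irrational α) (hα0 : 0 < α) (hα1 : α < 1)
    (hβ : Irrational β) (hβ0 : 0 < β) (hβ1 : β < 1) {m : ℕ}
    (hq : qden β (m + 2) = qden α (m + 2) + 1) (hq' : qden β (m + 3) + 1 = qden α (m + 3))
    (hb : pquot β (m + 2) = 1) (hc : qden β m + qden α (m + 1) = pquot α (m + 3) + 1) :
    0 < approxErr β m - approxErr α (m + 1) ∧
      qden α (m + 3) * (qden α (m + 3) - 1 : ℝ) * (approxErr β m - approxErr α (m + 1)) <
        pquot α (m + 3) := by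
  have hqR : (qden β (m + 2) : ℝ) = qden α (m + 2) + 1 := by exact_mod_cast hq
  have hq'R : (qden β (m + 3) : ℝ) = qden α (m + 3) - 1 := by
    rw [eq_sub_iff_add_eq]; exact_mod_cast hq'
  have hcR : (qden β m + qden α (m + 1) : ℝ) = pquot α (m + 3) + 1 := by exact_mod_cast hc
  have hqrec_α : (qden α (m + 3) : ℝ) = pquot α (m + 3) * qden α (m + 2) + qden α (m + 1) := by
    exact_mod_cast qden_add_two (ξ := α) (m + 1)
  have hqrec_β : (qden α (m + 2) + 1 : ℝ) = qden β (m + 1) + qden β m := by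
    have := qden_add_two (ξ := β) m
    rw [hb, one_mul] at this
    rw [← hqR]
    exact_mod_cast this
  have hrec_β : approxErr β (m + 2) = approxErr β m - approxErr β (m + 1) := by
    rw [approxErr_add_two hβ, hb, Nat.cast_one, one_mul]
  set A : ℝ := (qden α (m + 2) : ℝ)
  set B : ℝ := (qden α (m + 3) : ℝ)
  set b : ℝ := (qden α (m + 1) : ℝ)
  set c : ℝ := (pquot α (m + 3) : ℝ)
  set s : ℝ := (qden β m : ℝ)
  set d := approxErr α (m + 2)
  set e := approxErr β (m + 2)
  set δ := approxErr β m - approxErr α (m + 1)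
  have hdet_α : A * approxErr α (m + 1) + b * d = 1 :=
    qden_succ_mul_approxErr_add_qden_mul_approxErr_succ hα hα0 hα1 (m + 1)
  have hdet_β : (A + 1) * approxErr β (m + 1) + qden β (m + 1) * e = 1 :=
    hqR ▸ qden_succ_mul_approxErr_add_qden_mul_approxErr_succ hβ hβ0 hβ1 (m + 1)
  have hd_lo : 1 < (B + A) * d := one_lt_qden_add_mul_approxErr hα hα0 hα1 (m + 2)
  have he_lo : 1 < (B - 1 + (A + 1)) * e :=
    hq'R ▸ hqR ▸ one_lt_qden_add_mul_approxErr hβ hβ0 hβ1 (m + 2)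
  have hd_hi : B * d < 1 := qden_succ_mul_approxErr_lt_one hα hα0 hα1 (m + 2)
  have he_hi : (B - 1) * e < 1 := hq'R ▸ qden_succ_mul_approxErr_lt_one hβ hβ0 hβ1 (m + 2)
  have hA : 0 < A := Nat.cast_pos.mpr (qden_pos hα (m + 2))
  have hb0 : 0 < b := Nat.cast_pos.mpr (qden_pos hα (m + 1))
  have hs : 0 < s := Nat.cast_pos.mpr (qden_pos hβ m)
  have hB : 1 < B := by
    have : (0 : ℝ) < qden β (m + 3) := by exact_mod_cast qden_pos hβ (m + 3)
    linarith
  have hδ : A * (A + 1) * δ = A * s * e + (A + 1) * b * d - 1 := by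
    linear_combination A * hdet_β - (A + 1) * hdet_α - A * (A + 1) * hrec_β
      + A * e * hqrec_β
  have hsum : A * s + (A + 1) * b = A + B := by linear_combination A * hcR - hqrec_α
  have hAA : 0 < A * (A + 1) := by positivity
  constructor
  · have hnum : 0 < A * s * e + (A + 1) * b * d - 1 := by
      refine pos_of_mul_pos_right ?_ (by linarith : 0 < A + B).le
      -- by `hsum`, this is `A s ((A + B) e - 1) + (A + 1) b ((A + B) d - 1)`
      nlinarith [mul_pos (mul_pos hA hs) (sub_pos.mpr he_lo),
        mul_pos (mul_pos (by linarith : 0 < A + 1) hb0) (sub_pos.mpr hd_lo)]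
    exact pos_of_mul_pos_right (hδ ▸ hnum) hAA.le
  · refine lt_of_mul_lt_mul_left ?_ hAA.le
    calc A * (A + 1) * (B * (B - 1) * δ)
        = B * (B - 1) * (A * s * e + (A + 1) * b * d - 1) := by rw [← hδ]; ring
      -- `A s B + (A + 1) b (B - 1) - B (B - 1) = (A + 1) (B - b) = A (A + 1) c`
      _ < A * (A + 1) * c := by
        nlinarith [mul_lt_mul_of_pos_left he_hi (by positivity : 0 < A * s * B),
          mul_lt_mul_of_pos_left hd_hi
            (mul_pos (mul_pos (by linarith) hb0) (by linarith) : 0 < (A + 1) * b * (B - 1))]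

theorem two_mul_approxErr_sub_approxErr_mul_pquot_lt (hα : Irrational α) (hα0 : 0 < α)
    (hα1 : α < 1) (hβ : Irrational β) (hβ0 : 0 < β) (hβ1 : β < 1) {m : ℕ}
    (hq : qden β (m + 2) = qden α (m + 2) + 1) (hq' : qden β (m + 3) + 1 = qden α (m + 3))
    (hb : pquot β (m + 2) = 1) (hc : qden β m + qden α (m + 1) = pquot α (m + 3) + 1)
    (ha : 4 * pquot α (m + 2) ≤ qden α (m + 2)) :
    2 * (approxErr β m - approxErr α (m + 1)) * pquot α (m + 2) < approxErr α (m + 2) := by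
  obtain ⟨hδ, hδc⟩ := approxErr_sub_approxErr_pos_and_lt hα hα0 hα1 hβ hβ0 hβ1 hq hq' hb hc
  have hqrec : (qden α (m + 3) : ℝ) = pquot α (m + 3) * qden α (m + 2) + qden α (m + 1) := by
    exact_mod_cast qden_add_two (ξ := α) (m + 1)
  have haR : 4 * (pquot α (m + 2) : ℝ) ≤ qden α (m + 2) := by exact_mod_cast ha
  set A : ℝ := (qden α (m + 2) : ℝ)
  set B : ℝ := (qden α (m + 3) : ℝ)
  set a : ℝ := (pquot α (m + 2) : ℝ)
  set c : ℝ := (pquot α (m + 3) : ℝ)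
  set d := approxErr α (m + 2)
  set δ := approxErr β m - approxErr α (m + 1)
  have hd_lo : 1 < (B + A) * d := one_lt_qden_add_mul_approxErr hα hα0 hα1 (m + 2)
  have hA : 0 < A := Nat.cast_pos.mpr (qden_pos hα (m + 2))
  have ha0 : 0 < a := Nat.cast_pos.mpr (one_le_pquot_succ hα (m + 1))
  have hc1 : 1 ≤ c := Nat.one_le_cast.mpr (one_le_pquot_succ hα (m + 2))
  have hb1 : (1 : ℝ) ≤ qden α (m + 1) := Nat.one_le_cast.mpr (qden_pos hα (m + 1))
  have hcA : c * A ≤ B - 1 := by linarith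
  have hAB : A ≤ B := by nlinarith
  have hB : 1 < B := by nlinarith
  have hkey : 2 * a * (A + B) * c ≤ B * (B - 1) := by
    refine le_of_mul_le_mul_left ?_ hA
    calc A * (2 * a * (A + B) * c) = 2 * a * (A + B) * (c * A) := by ring
      _ ≤ A * B * (B - 1) :=
        mul_le_mul (by nlinarith) hcA (by positivity) (by positivity)
      _ = A * (B * (B - 1)) := by ring
  have hBB : 0 < B * (B - 1) := mul_pos (by linarith) (by linarith)
  have hP : 0 < B * (B - 1) * (A + B) := mul_pos hBB (by linarith)
  refine lt_of_mul_lt_mul_left ?_ hP.le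
  calc B * (B - 1) * (A + B) * (2 * δ * a) = 2 * a * (A + B) * (B * (B - 1) * δ) := by ring
    _ < 2 * a * (A + B) * c := by gcongr
    _ ≤ B * (B - 1) := hkey
    _ < B * (B - 1) * ((B + A) * d) := lt_mul_of_one_lt_right hBB hd_lo
    _ = B * (B - 1) * (A + B) * d := by ring

end

structure QuotientPattern (α β : ℝ) (R Q : ℕ → ℕ) : Prop where
  hR : ∀ k, 1 ≤ k → R k = qden α (4 * k - 3) + 1
  hQ : ∀ k, 1 ≤ k → Q k + 1 = qden α (4 * k - 2)
  ha1 : pquot α 1 = 2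
  ha2 : pquot α 2 = 2
  ha'1 : pquot β 1 = 3
  ha'2 : pquot β 2 = 1
  ha3 : ∀ k, 1 ≤ k → pquot α (4 * k - 1) = 1
  ha4 : ∀ k, 1 ≤ k → pquot α (4 * k) = 3
  ha5 : ∀ k, 1 ≤ k → pquot α (4 * k + 1) + 1 = 2 * Q k + R k
  ha6 : ∀ k, 1 ≤ k → pquot α (4 * k + 2) = 6 * Q k + 4 * R k
  ha'3 : ∀ k, 1 ≤ k → pquot β (4 * k - 1) = 2
  ha'4 : ∀ k, 1 ≤ k → pquot β (4 * k) + 2 = 4 * Q k + 3 * R k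
  ha'5 : ∀ k, 1 ≤ k → pquot β (4 * k + 1) = 1
  ha'6 : ∀ k, 1 ≤ k → pquot β (4 * k + 2) + 1 = 6 * Q k + 4 * R k

namespace QuotientPattern

variable {α β : ℝ} {R Q : ℕ → ℕ}

theorem qden_eq_of_offset (h : QuotientPattern α β R Q) {j : ℕ}
    (h1 : qden β (4 * j + 1) = qden α (4 * j + 1) + 1)
    (h2 : qden β (4 * j + 2) + 1 = qden α (4 * j + 2)) :
    qden α (4 * j + 3) = Q (j + 1) + R (j + 1) ∧
      qden α (4 * j + 4) = 4 * Q (j + 1) + 3 * R (j + 1) + 1 ∧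
      qden β (4 * j + 2) = Q (j + 1) ∧ qden β (4 * j + 3) = 2 * Q (j + 1) + R (j + 1) := by
  have hR : R (j + 1) = qden α (4 * j + 1) + 1 := by simpa [mul_add] using h.hR (j + 1) (by omega)
  have hQ : Q (j + 1) + 1 = qden α (4 * j + 2) := by simpa [mul_add] using h.hQ (j + 1) (by omega)
  have ha3 : pquot α (4 * j + 3) = 1 := by simpa [mul_add] using h.ha3 (j + 1) (by omega)
  have ha4 : pquot α (4 * j + 4) = 3 := by simpa [mul_add] using h.ha4 (j + 1) (by omega)
  have hb3 : pquot β (4 * j + 3) = 2 := by simpa [mul_add] using h.ha'3 (j + 1) (by omega)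
  have q3 : qden α (4 * j + 3) = pquot α (4 * j + 3) * qden α (4 * j + 2) + qden α (4 * j + 1) :=
    qden_add_two _
  have q4 : qden α (4 * j + 4) = pquot α (4 * j + 4) * qden α (4 * j + 3) + qden α (4 * j + 2) :=
    qden_add_two _
  have q3' : qden β (4 * j + 3) = pquot β (4 * j + 3) * qden β (4 * j + 2) + qden β (4 * j + 1) :=
    qden_add_two _
  rw [ha3] at q3
  rw [ha4] at q4
  rw [hb3] at q3'
  omega

theorem qden_block_relations (h : QuotientPattern α β R Q) {j : ℕ}
    (h1 : qden β (4 * j + 1) = qden α (4 * j + 1) + 1)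
    (h2 : qden β (4 * j + 2) + 1 = qden α (4 * j + 2)) :
    qden β (4 * j + 3) + qden α (4 * j + 4) = pquot α (4 * j + 6) + 1 ∧
      4 * pquot α (4 * j + 5) ≤ qden α (4 * j + 5) ∧
      qden β (4 * j + 5) = qden α (4 * j + 5) + 1 ∧
      qden β (4 * j + 6) + 1 = qden α (4 * j + 6) := by
  obtain ⟨q3, q4, q2', q3'⟩ := h.qden_eq_of_offset h1 h2
  have ha5 : pquot α (4 * j + 5) + 1 = 2 * Q (j + 1) + R (j + 1) := by
    simpa [mul_add] using h.ha5 (j + 1) (by omega)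
  have ha6 : pquot α (4 * j + 6) = 6 * Q (j + 1) + 4 * R (j + 1) := by
    simpa [mul_add] using h.ha6 (j + 1) (by omega)
  have hb4 : pquot β (4 * j + 4) + 2 = 4 * Q (j + 1) + 3 * R (j + 1) := by
    simpa [mul_add] using h.ha'4 (j + 1) (by omega)
  have hb5 : pquot β (4 * j + 5) = 1 := by simpa [mul_add] using h.ha'5 (j + 1) (by omega)
  have hb6 : pquot β (4 * j + 6) + 1 = 6 * Q (j + 1) + 4 * R (j + 1) := by
    simpa [mul_add] using h.ha'6 (j + 1) (by omega)
  have q5 : qden α (4 * j + 5) = pquot α (4 * j + 5) * qden α (4 * j + 4) + qden α (4 * j + 3) :=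
    qden_add_two _
  have q6 : qden α (4 * j + 6) = pquot α (4 * j + 6) * qden α (4 * j + 5) + qden α (4 * j + 4) :=
    qden_add_two _
  have q4' : qden β (4 * j + 4) = pquot β (4 * j + 4) * qden β (4 * j + 3) + qden β (4 * j + 2) :=
    qden_add_two _
  have q5' : qden β (4 * j + 5) = pquot β (4 * j + 5) * qden β (4 * j + 4) + qden β (4 * j + 3) :=
    qden_add_two _
  have q6' : qden β (4 * j + 6) = pquot β (4 * j + 6) * qden β (4 * j + 5) + qden β (4 * j + 4) :=
    qden_add_two _
  rw [hb5] at q5'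
  have hs : qden β (4 * j + 3) = pquot α (4 * j + 5) + 1 := by omega
  have hc : qden β (4 * j + 3) + qden α (4 * j + 4) = pquot α (4 * j + 6) + 1 := by omega
  have h5 : qden β (4 * j + 5) = qden α (4 * j + 5) + 1 := by
    have hq4 : qden α (4 * j + 4) = pquot β (4 * j + 4) + 3 := by omega
    have hlin : qden β (4 * j + 2) + qden α (4 * j + 4) =
        2 * qden β (4 * j + 3) + qden α (4 * j + 3) + 1 := by omega
    -- expand both sides by the recurrences and cancel the products with `hq4` and `hs`
    linear_combination q5' + q4' - q5 - qden β (4 * j + 3) * hq4 + qden α (4 * j + 4) * hs + hlin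
  refine ⟨hc, ?_, h5, ?_⟩
  · have : 4 ≤ qden α (4 * j + 4) := by omega
    calc 4 * pquot α (4 * j + 5) ≤ pquot α (4 * j + 5) * qden α (4 * j + 4) := by
          rw [mul_comm]; exact Nat.mul_le_mul_left _ this
      _ ≤ qden α (4 * j + 5) := q5 ▸ Nat.le_add_right _ _
  · have hb6' : pquot α (4 * j + 6) = pquot β (4 * j + 6) + 1 := by omega
    linear_combination q6' - q6 + (pquot β (4 * j + 6) + 1) * h5 - (qden α (4 * j + 5) + 1) * hb6'
      - q5' - hc

theorem qden_offset (h : QuotientPattern α β R Q) (j : ℕ) :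
    qden β (4 * j + 1) = qden α (4 * j + 1) + 1 ∧ qden β (4 * j + 2) + 1 = qden α (4 * j + 2) := by
  induction j with
  | zero =>
    show qden β 1 = qden α 1 + 1 ∧ qden β 2 + 1 = qden α 2
    have hα2 : qden α 2 = pquot α 2 * qden α 1 + qden α 0 := qden_add_two 0
    have hβ2 : qden β 2 = pquot β 2 * qden β 1 + qden β 0 := qden_add_two 0
    simp [hα2, hβ2, qden_zero, qden_one, h.ha1, h.ha2, h.ha'1, h.ha'2]
  | succ j ih =>
    obtain ⟨-, -, h5, h6⟩ := h.qden_block_relations ih.1 ih.2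
    exact ⟨h5, h6⟩

end QuotientPattern

theorem delta_positivity_bounds (α β : ℝ)
    (hα0 : 0 < α) (hα1 : α < 1) (hβ0 : 0 < β) (hβ1 : β < 1)
    (hα : Irrational α) (hβ : Irrational β)
    (R Q : ℕ → ℕ)
    (hR : ∀ k, 1 ≤ k → R k = qden α (4 * k - 3) + 1)
    (hQ : ∀ k, 1 ≤ k → Q k + 1 = qden α (4 * k - 2))
    (ha1 : pquot α 1 = 2) (ha2 : pquot α 2 = 2)
    (ha'1 : pquot β 1 = 3) (ha'2 : pquot β 2 = 1)
    (ha3 : ∀ k, 1 ≤ k → pquot α (4 * k - 1) = 1)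
    (ha4 : ∀ k, 1 ≤ k → pquot α (4 * k) = 3)
    (ha5 : ∀ k, 1 ≤ k → pquot α (4 * k + 1) + 1 = 2 * Q k + R k)
    (ha6 : ∀ k, 1 ≤ k → pquot α (4 * k + 2) = 6 * Q k + 4 * R k)
    (ha'3 : ∀ k, 1 ≤ k → pquot β (4 * k - 1) = 2)
    (ha'4 : ∀ k, 1 ≤ k → pquot β (4 * k) + 2 = 4 * Q k + 3 * R k)
    (ha'5 : ∀ k, 1 ≤ k → pquot β (4 * k + 1) = 1)
    (ha'6 : ∀ k, 1 ≤ k → pquot β (4 * k + 2) + 1 = 6 * Q k + 4 * R k)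
    :
    ∀ k, 1 ≤ k →
      0 < 2 * (nint ((qden β (4 * k - 1) : ℝ) * β) - nint ((qden α (4 * k) : ℝ) * α))
          * (pquot α (4 * k + 1) : ℝ) ∧
      2 * (nint ((qden β (4 * k - 1) : ℝ) * β) - nint ((qden α (4 * k) : ℝ) * α))
          * (pquot α (4 * k + 1) : ℝ) < nint ((qden α (4 * k + 1) : ℝ) * α) ∧
      nint ((qden α (4 * k + 1) : ℝ) * α) < nint ((qden β (4 * k + 1) : ℝ) * β) := by
  have hP : QuotientPattern α β R Q :=
    ⟨hR, hQ, ha1, ha2, ha'1, ha'2, ha3, ha4, ha5, ha6, ha'3, ha'4, ha'5, ha'6⟩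
  intro k hk
  obtain ⟨j, rfl⟩ : ∃ j, k = j + 1 := ⟨k - 1, by omega⟩
  obtain ⟨h1, h2⟩ := hP.qden_offset j
  obtain ⟨hc, ha, h5, h6⟩ := hP.qden_block_relations h1 h2
  have hb5 : pquot β (4 * j + 5) = 1 := by simpa [mul_add] using ha'5 (j + 1) (by omega)
  have ha7 : pquot α (4 * j + 7) = 1 := by simpa [mul_add] using ha3 (j + 2) (by omega)
  have hb7 : pquot β (4 * j + 7) = 2 := by simpa [mul_add] using ha'3 (j + 2) (by omega)
  rw [show 4 * (j + 1) - 1 = 4 * j + 3 by omega, show 4 * (j + 1) = 4 * j + 4 by ring,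
    nint_qden_mul hβ hβ0 hβ1 (by omega), nint_qden_mul hα hα0 hα1 (by omega),
    nint_qden_mul hα hα0 hα1 (by omega), nint_qden_mul hβ hβ0 hβ1 (by omega)]
  refine ⟨?_, ?_, ?_⟩
  · have hδ := (approxErr_sub_approxErr_pos_and_lt hα hα0 hα1 hβ hβ0 hβ1 h5 h6 hb5 hc).1
    have ha_pos : (0 : ℝ) < pquot α (4 * j + 5) := Nat.cast_pos.mpr (one_le_pquot_succ hα _)
    positivity
  · exact two_mul_approxErr_sub_approxErr_mul_pquot_lt hα hα0 hα1 hβ hβ0 hβ1 h5 h6 hb5 hc ha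
  · exact approxErr_lt_approxErr hα hα0 hα1 hβ hβ0 hβ1 h5 h6 ha7 hb7
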